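/- Let β > 1 and f ∈ L¹(ℝ). If sup_{t > 0} ω₁(f)(t)/t^β < ∞, then 𝔉f ∈ L¹(ℝ). -/

import Mathlib

open MeasureTheory Filter
open scoped ENNReal

noncomputable section

/-- The Fourier transform on the real line with kernel `e^{-iξx}`:
`𝔉f(ξ) = ∫ f(x) e^{-iξx} dx`. -/
def FT (f : ℝ → ℂ) (ξ : ℝ) : ℂ :=
  ∫ x : ℝ, f x * Complex.exp (-Complex.I * ξ * x)

/-- The second-order modulus of continuity of `f` in `L^p(ℝ)`:
`ω_p(f)(t) = ‖f(·+t) + f(·−t) − 2f‖_{L^p}`. -/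
def modCont (p : ℝ≥0∞) (f : ℝ → ℂ) (t : ℝ) : ℝ :=
  (eLpNorm (fun x => f (x + t) + f (x - t) - 2 * f x) p volume).toReal

/-! The Fourier transform turns the second difference `f(· + t) + f(· - t) - 2f` into
multiplication by `2 cos(2π t w) - 2` (Mathlib's normalisation `e^{-2πixw}`), which is `-4` when
`|t w| = 1/2`. Taking `t = 1/(2|w|)` gives `4 ‖𝓕 f w‖ ≤ ω₁(f)(1/(2|w|)) ≤ A (2|w|)^{-β}`, and a
continuous function decaying like `|w|^{-β}` with `β > 1` is integrable. Finally `𝔉 f` is `𝓕 f`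
rescaled by `2π`. -/

open FourierTransform
open scoped Real RealInnerProductSpace

section SecondDifference

variable {V E : Type*} [NormedAddCommGroup V] [InnerProductSpace ℝ V] [FiniteDimensional ℝ V]
  [MeasurableSpace V] [BorelSpace V] [NormedAddCommGroup E] [NormedSpace ℂ E]

theorem fourier_comp_add_right (f : V → E) (t w : V) :
    𝓕 (fun x ↦ f (x + t)) w = 𝐞 ⟪t, w⟫ • 𝓕 f w :=
  congrFun (VectorFourier.fourierIntegral_comp_add_right 𝐞 volume (innerₗ V) f t) w

theorem fourier_secondDiff {f : V → E} (hf : Integrable f) (t w : V) :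
    𝓕 (fun x ↦ f (x + t) + f (x - t) - (2 : ℂ) • f x) w
      = (2 * Real.cos (2 * π * ⟪t, w⟫) - 2 : ℂ) • 𝓕 f w := by
  have hint : ∀ s, Integrable (fun x ↦ 𝐞 (-⟪x, w⟫) • f (x + s)) := fun s ↦
    (Real.fourierIntegral_convergent_iff w).2 (hf.comp_add_right s)
  have hint0 : Integrable (fun x ↦ 𝐞 (-⟪x, w⟫) • f x) :=
    (Real.fourierIntegral_convergent_iff w).2 hf
  calc 𝓕 (fun x ↦ f (x + t) + f (x - t) - (2 : ℂ) • f x) w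
      = 𝓕 (fun x ↦ f (x + t)) w + 𝓕 (fun x ↦ f (x + -t)) w - (2 : ℂ) • 𝓕 f w := by
        simp only [Real.fourier_eq]
        rw [← integral_smul, ← integral_add (hint t) (hint (-t)), ← integral_sub]
        · congr 1 with x
          rw [smul_sub, smul_add, smul_comm, sub_eq_add_neg x t]
        · exact (hint t).add (hint (-t))
        · exact hint0.smul (2 : ℂ)
    _ = (𝐞 ⟪t, w⟫ + 𝐞 (-⟪t, w⟫) - 2 : ℂ) • 𝓕 f w := by
        rw [fourier_comp_add_right, fourier_comp_add_right, inner_neg_left, sub_smul, add_smul,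
          Circle.smul_def, Circle.smul_def]
    _ = (2 * Real.cos (2 * π * ⟪t, w⟫) - 2 : ℂ) • 𝓕 f w := by
        rw [Real.fourierChar_apply, Real.fourierChar_apply, Complex.ofReal_cos, Complex.two_cos]
        push_cast; ring_nf

theorem mul_norm_fourier_le_integral_norm_secondDiff {f : V → E} (hf : Integrable f) (t w : V) :
    (2 - 2 * Real.cos (2 * π * ⟪t, w⟫)) * ‖𝓕 f w‖
      ≤ ∫ x, ‖f (x + t) + f (x - t) - (2 : ℂ) • f x‖ := by
  have hnorm : ‖(2 * Real.cos (2 * π * ⟪t, w⟫) - 2 : ℂ)‖ = 2 - 2 * Real.cos (2 * π * ⟪t, w⟫) := by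
    rw [← Complex.ofReal_ofNat, ← Complex.ofReal_mul, ← Complex.ofReal_sub, Complex.norm_real,
      Real.norm_eq_abs, abs_of_nonpos (by linarith [Real.cos_le_one (2 * π * ⟪t, w⟫)]), neg_sub]
  rw [← hnorm, ← norm_smul, ← fourier_secondDiff hf]
  exact VectorFourier.norm_fourierIntegral_le_integral_norm _ _ _ _ _

end SecondDifference

theorem integrable_of_isBigO_rpow_neg {V F : Type*} [NormedAddCommGroup V] [NormedSpace ℝ V]
    [FiniteDimensional ℝ V] [MeasurableSpace V] [BorelSpace V] {μ : Measure V}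
    [μ.IsAddHaarMeasure] [NormedAddCommGroup F] {g : V → F} {β : ℝ}
    (hβ : (Module.finrank ℝ V : ℝ) < β) (hg : LocallyIntegrable g μ)
    (hO : g =O[cocompact V] fun w ↦ ‖w‖ ^ (-β)) : Integrable g μ := by
  have hβ0 : 0 ≤ β := (Nat.cast_nonneg _).trans hβ.le
  refine hg.integrable_of_isBigO_cocompact (hO.trans ?_)
    ((integrable_one_add_norm hβ).integrableAtFilter _)
  refine Asymptotics.IsBigO.of_bound (2 ^ β) ?_
  filter_upwards [tendsto_norm_cocompact_atTop.eventually_ge_atTop 1] with w hw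
  have hw0 : 0 < ‖w‖ := zero_lt_one.trans_le hw
  rw [Real.norm_of_nonneg (by positivity), Real.norm_of_nonneg (by positivity),
    Real.rpow_neg hw0.le, Real.rpow_neg (by positivity)]
  calc (‖w‖ ^ β)⁻¹ = 2 ^ β * ((2 * ‖w‖) ^ β)⁻¹ := by
        rw [Real.mul_rpow zero_le_two hw0.le, mul_inv, ← mul_assoc,
          mul_inv_cancel₀ (by positivity), one_mul]
    _ ≤ 2 ^ β * ((1 + ‖w‖) ^ β)⁻¹ := by gcongr; linarith

theorem modCont_one_eq_integral {f : ℝ → ℂ} (hf : Integrable f) (t : ℝ) :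
    modCont 1 f t = ∫ x, ‖f (x + t) + f (x - t) - 2 * f x‖ := by
  have hΔ : Integrable (fun x ↦ f (x + t) + f (x - t) - 2 * f x) :=
    ((hf.comp_add_right t).add (hf.comp_sub_right t)).sub (hf.const_mul 2)
  rw [modCont, eLpNorm_one_eq_lintegral_enorm, integral_norm_eq_lintegral_enorm hΔ.1]

theorem four_mul_norm_fourier_le_modCont {f : ℝ → ℂ} (hf : Integrable f) {w : ℝ} (hw : w ≠ 0) :
    4 * ‖𝓕 f w‖ ≤ modCont 1 f (2 * |w|)⁻¹ := by
  have hcos : Real.cos (2 * π * ⟪(2 * |w|)⁻¹, w⟫) = -1 := by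
    have hw' : 0 < |w| := abs_pos.2 hw
    rw [← Real.cos_abs, Real.inner_apply, abs_mul, abs_of_pos Real.two_pi_pos, abs_mul,
      abs_of_pos (by positivity : 0 < (2 * |w|)⁻¹), ← Real.cos_pi]
    congr 1
    field_simp
  have h := mul_norm_fourier_le_integral_norm_secondDiff hf (2 * |w|)⁻¹ w
  rw [hcos] at h
  simp only [smul_eq_mul] at h
  rw [modCont_one_eq_integral hf]
  linarith

theorem fourier_isBigO_rpow_neg_of_modCont {f : ℝ → ℂ} (hf : Integrable f) {β A : ℝ}
    (hA : ∀ t > (0 : ℝ), modCont 1 f t / t ^ β ≤ A) :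
    𝓕 f =O[cocompact ℝ] fun w ↦ ‖w‖ ^ (-β) := by
  refine Asymptotics.IsBigO.of_bound (A * 2 ^ (-β) / 4) ?_
  filter_upwards [tendsto_norm_cocompact_atTop.eventually_gt_atTop 0] with w hw
  have ht : 0 < (2 * |w|)⁻¹ := by positivity
  have hmod := (div_le_iff₀ (Real.rpow_pos_of_pos ht β)).1 (hA _ ht)
  rw [Real.inv_rpow (by positivity), ← Real.rpow_neg (by positivity),
    Real.mul_rpow zero_le_two (abs_nonneg w), ← mul_assoc] at hmod
  rw [Real.norm_of_nonneg (by positivity), Real.norm_eq_abs]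
  linarith [four_mul_norm_fourier_le_modCont hf (norm_pos_iff.1 hw)]

theorem FT_eq_fourier (f : ℝ → ℂ) (ξ : ℝ) : FT f ξ = 𝓕 f (ξ / (2 * π)) := by
  rw [FT, Real.fourier_real_eq_integral_exp_smul]
  congr 1 with x
  rw [smul_eq_mul, mul_comm]
  congr 2
  push_cast
  field_simp

/-- If `β > 1`, `f ∈ L¹(ℝ)` and `sup_{t>0} ω₁(f)(t)/t^β < ∞`, then `𝔉f ∈ L¹(ℝ)`. -/
theorem fourier_integrable_of_modCont (β : ℝ) (hβ : 1 < β) (f : ℝ → ℂ)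
    (hf : Integrable f volume)
    (h : ∃ A : ℝ, ∀ t > (0 : ℝ), modCont 1 f t / t ^ β ≤ A) :
    Integrable (FT f) volume := by
  obtain ⟨A, hA⟩ := h
  have hcont : Continuous (𝓕 f) :=
    VectorFourier.fourierIntegral_continuous Real.continuous_fourierChar
      (by fun_prop) hf
  have hFf : Integrable (𝓕 f) :=
    integrable_of_isBigO_rpow_neg (by simpa using hβ) hcont.locallyIntegrable
      (fourier_isBigO_rpow_neg_of_modCont hf hA)
  exact (hFf.comp_div Real.two_pi_pos.ne').congr
    (ae_of_all _ fun ξ ↦ (FT_eq_fourier f ξ).symm)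

end
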